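/- arXiv:2512.14624 — 2 statements merged into one kernel-verified Lean document; each statement's English description precedes it below -/
import Mathlib

section
/- ation: For p, q ∈ [0,1] and η > 0, if kl(p,q) < 9η/2 then |q − ((1−2η)p + 3η)/(1+4η)| ≤ 3·√(p(1−p)η + η²)/(1+4η). -/
/-!
The refined Pinsker inequality `(q - p)² ≤ 2 kl(p,q) m(1 - m)` with `m = (p + 2q)/3` holds
because the gap `kl(p,x) - (x - p)²/(2 m_x(1 - m_x))`, `m_x = (p + 2x)/3`, vanishes at `x = p`
and its derivative in `x` has the sign of `x - p`. With `kl(p,q) < 9η/2` this gives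
`(q - p)² ≤ 9η m(1 - m)`, a quadratic inequality in `q`; completing the square turns it into the
stated interval around `((1 - 2η)p + 3η)/(1 + 4η)`.
-/

open Real

/-- The Bernoulli Kullback–Leibler divergence `kl : [0,1] × [0,1] → [0,∞]`, with the
conventions `kl(0,q) = −log(1−q)`, `kl(1,q) = −log q`, and the value `∞` when a
logarithm of zero would occur. -/
noncomputable def bernKL (p q : ℝ) : EReal :=
  if p = 0 then (if q = 1 then ⊤ else ((-Real.log (1 - q) : ℝ) : EReal))
  else if p = 1 then (if q = 0 then ⊤ else ((-Real.log q : ℝ) : EReal))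
  else if q = 0 ∨ q = 1 then ⊤
  else ((p * Real.log (p / q) + (1 - p) * Real.log ((1 - p) / (1 - q)) : ℝ) : EReal)

open Set

noncomputable def klReal (p q : ℝ) : ℝ :=
  p * (log p - log q) + (1 - p) * (log (1 - p) - log (1 - q))

theorem le_of_hasDerivAt_of_sub_mul_nonneg {f f' : ℝ → ℝ} {a b p x : ℝ} (hp : p ∈ Ioo a b)
    (hx : x ∈ Ioo a b) (hf : ∀ y ∈ Ioo a b, HasDerivAt f (f' y) y)
    (hf' : ∀ y ∈ Ioo a b, 0 ≤ (y - p) * f' y) : f p ≤ f x := by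
  have hcont : ContinuousOn f (Ioo a b) := fun y hy => (hf y hy).continuousAt.continuousWithinAt
  rcases le_total p x with hpx | hxp
  · have hsub : Icc p x ⊆ Ioo a b := Icc_subset_Ioo hp.1 hx.2
    refine monotoneOn_of_hasDerivWithinAt_nonneg (f' := f') (convex_Icc p x) (hcont.mono hsub)
      (fun y hy => ?_) (fun y hy => ?_) (left_mem_Icc.2 hpx) (right_mem_Icc.2 hpx) hpx
    all_goals rw [interior_Icc] at hy
    · exact (hf y (hsub (Ioo_subset_Icc_self hy))).hasDerivWithinAt
    · exact nonneg_of_mul_nonneg_right (hf' y (hsub (Ioo_subset_Icc_self hy))) (sub_pos.2 hy.1)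
  · have hsub : Icc x p ⊆ Ioo a b := Icc_subset_Ioo hx.1 hp.2
    refine antitoneOn_of_hasDerivWithinAt_nonpos (f' := f') (convex_Icc x p) (hcont.mono hsub)
      (fun y hy => ?_) (fun y hy => ?_) (left_mem_Icc.2 hxp) (right_mem_Icc.2 hxp) hxp
    all_goals rw [interior_Icc] at hy
    · exact (hf y (hsub (Ioo_subset_Icc_self hy))).hasDerivWithinAt
    · exact nonpos_of_mul_nonneg_right (hf' y (hsub (Ioo_subset_Icc_self hy))) (sub_neg.2 hy.2)

theorem continuous_klReal_left (q : ℝ) : Continuous fun p => klReal p q := by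
  have : (fun p => klReal p q) = fun p =>
      p * log p - p * log q + ((1 - p) * log (1 - p) - (1 - p) * log (1 - q)) := by
    funext p; unfold klReal; ring
  rw [this]
  fun_prop

noncomputable def klQuadraticGap (p x : ℝ) : ℝ :=
  klReal p x - (x - p) ^ 2 / (2 * ((p + 2 * x) / 3 * (1 - (p + 2 * x) / 3)))

noncomputable def klQuadraticGapDeriv (p x : ℝ) : ℝ :=
  (x - p) ^ 3 * ((1 - x) * (1 - (p + 2 * x) / 3) ^ 2 + x * ((p + 2 * x) / 3) ^ 2) /
    (9 * (x * (1 - x)) * ((p + 2 * x) / 3 * (1 - (p + 2 * x) / 3)) ^ 2)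

theorem hasDerivAt_klQuadraticGap {p x : ℝ} (hp : p ∈ Icc 0 1) (hx : x ∈ Ioo 0 1) :
    HasDerivAt (klQuadraticGap p) (klQuadraticGapDeriv p x) x := by
  obtain ⟨hx0, hx1⟩ := hx
  have hm0 : 0 < (p + 2 * x) / 3 := by linarith [hp.1]
  have hm1 : 0 < 1 - (p + 2 * x) / 3 := by linarith [hp.2]
  have hlin : HasDerivAt (fun y => (p + 2 * y) / 3) (2 / 3) x := by
    simpa using (((hasDerivAt_id x).const_mul 2).const_add p).div_const 3
  have hkl : HasDerivAt (fun y => klReal p y) (p * -x⁻¹ + (1 - p) * -(-1 / (1 - x))) x :=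
    (((hasDerivAt_log hx0.ne').const_sub _).const_mul p).add
      ((((hasDerivAt_id x).const_sub 1).log (by simp; linarith)).const_sub _ |>.const_mul (1 - p))
  have hquad := (((hasDerivAt_id x).sub_const p).pow 2).div
    ((hlin.mul (hlin.const_sub 1)).const_mul 2) (mul_pos two_pos (mul_pos hm0 hm1)).ne'
  refine (hkl.sub hquad).congr_deriv ?_
  have hx1' : 1 - x ≠ 0 := by linarith
  simp only [id, Pi.mul_apply, Pi.pow_apply, klQuadraticGapDeriv]
  generalize hm : (p + 2 * x) / 3 = m at hm0 hm1 ⊢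
  obtain rfl : p = 3 * m - 2 * x := by linarith
  field_simp
  ring

theorem sub_mul_klQuadraticGapDeriv_nonneg {p x : ℝ} (hx : x ∈ Ioo 0 1) :
    0 ≤ (x - p) * klQuadraticGapDeriv p x := by
  obtain ⟨hx0, hx1⟩ := hx
  have h1x : 0 < 1 - x := by linarith
  have hN : 0 ≤ (1 - x) * (1 - (p + 2 * x) / 3) ^ 2 + x * ((p + 2 * x) / 3) ^ 2 :=
    add_nonneg (mul_nonneg h1x.le (sq_nonneg _)) (mul_nonneg hx0.le (sq_nonneg _))
  rw [klQuadraticGapDeriv, ← mul_div_assoc, ← mul_assoc, ← pow_succ']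
  exact div_nonneg (mul_nonneg (Even.pow_nonneg ⟨2, rfl⟩ _) hN)
    (mul_nonneg (mul_nonneg (by norm_num) (mul_pos hx0 h1x).le) (sq_nonneg _))

theorem klQuadraticGap_nonneg {p x : ℝ} (hp : p ∈ Ioo 0 1) (hx : x ∈ Ioo 0 1) :
    0 ≤ klQuadraticGap p x := by
  have hpp : klQuadraticGap p p = 0 := by simp [klQuadraticGap, klReal]
  exact hpp ▸ le_of_hasDerivAt_of_sub_mul_nonneg hp hx
    (fun y hy => hasDerivAt_klQuadraticGap (Ioo_subset_Icc_self hp) hy)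
    (fun y hy => sub_mul_klQuadraticGapDeriv_nonneg hy)

theorem sq_sub_le_two_mul_klReal_mul {p q : ℝ} (hp : p ∈ Icc 0 1) (hq : q ∈ Ioo 0 1) :
    (q - p) ^ 2 ≤ 2 * klReal p q * ((p + 2 * q) / 3 * (1 - (p + 2 * q) / 3)) := by
  have hclosed : IsClosed
      {p | (q - p) ^ 2 ≤ 2 * klReal p q * ((p + 2 * q) / 3 * (1 - (p + 2 * q) / 3))} :=
    isClosed_le (by fun_prop) ((continuous_const.mul (continuous_klReal_left q)).mul (by fun_prop))
  -- The monotonicity argument needs `p` inside `(0, 1)`; the endpoints follow by continuity in `p`.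
  refine (closure_Ioo (zero_ne_one (α := ℝ)) ▸ hclosed.closure_subset_iff.2 fun p hp => ?_) hp
  have hV : 0 < (p + 2 * q) / 3 * (1 - (p + 2 * q) / 3) := by
    apply mul_pos <;> linarith [hp.1, hp.2, hq.1, hq.2]
  have hgap := klQuadraticGap_nonneg hp hq
  rw [klQuadraticGap, sub_nonneg, div_le_iff₀ (by positivity)] at hgap
  rw [mem_ofPred_eq]
  linarith

theorem bernKL_eq_klReal {p q : ℝ} (hq : q ∈ Ioo 0 1) : bernKL p q = (klReal p q : EReal) := by
  obtain ⟨hq0, hq1⟩ := hq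
  have h1q : 1 - q ≠ 0 := by linarith
  unfold bernKL
  by_cases hp0 : p = 0
  · simp [klReal, hp0, hq1.ne]
  by_cases hp1 : p = 1
  · simp [klReal, hp1, hq0.ne']
  have h1p : 1 - p ≠ 0 := sub_ne_zero.2 (Ne.symm hp1)
  rw [if_neg hp0, if_neg hp1, if_neg (by rintro (h | h) <;> linarith), log_div hp0 hq0.ne',
    log_div h1p h1q, klReal]

theorem bernKL_eq_top {p q : ℝ} (hq : q = 0 ∨ q = 1) (hpq : p ≠ q) : bernKL p q = ⊤ := by
  rcases hq with rfl | rfl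
  · by_cases hp1 : p = 1 <;> simp [bernKL, hpq, hp1]
  · by_cases hp0 : p = 0 <;> simp [bernKL, hpq, hp0]

theorem abs_sub_le_of_sq_sub_le {p q η : ℝ} (hη : 0 < 1 + 4 * η)
    (h : (q - p) ^ 2 ≤ 9 * η * ((p + 2 * q) / 3 * (1 - (p + 2 * q) / 3))) :
    |q - ((1 - 2 * η) * p + 3 * η) / (1 + 4 * η)| ≤
      3 * √(p * (1 - p) * η + η ^ 2) / (1 + 4 * η) := by
  have hA : q - ((1 - 2 * η) * p + 3 * η) / (1 + 4 * η) =
      (q * (1 + 4 * η) - ((1 - 2 * η) * p + 3 * η)) / (1 + 4 * η) := by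
    rw [sub_div, mul_div_cancel_right₀ _ hη.ne']
  -- Multiplying `h` by `1 + 4η` and completing the square in `q`.
  have hA2 : (q * (1 + 4 * η) - ((1 - 2 * η) * p + 3 * η)) ^ 2 ≤
      9 * (p * (1 - p) * η + η ^ 2) := by
    nlinarith [mul_le_mul_of_nonneg_left h hη.le]
  rw [hA, abs_div, abs_of_pos hη]
  gcongr
  calc |q * (1 + 4 * η) - ((1 - 2 * η) * p + 3 * η)|
      ≤ √(9 * (p * (1 - p) * η + η ^ 2)) := abs_le_sqrt hA2
    _ = 3 * √(p * (1 - p) * η + η ^ 2) := by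
      rw [sqrt_mul (by norm_num), show (9 : ℝ) = 3 ^ 2 by norm_num, sqrt_sq (by norm_num)]

/-- If `kl(p,q) < 9η/2` then `|q − ((1−2η)p + 3η)/(1+4η)| ≤ 3√(p(1−p)η + η²)/(1+4η)`. -/
theorem bernKL_q_localization (p q η : ℝ) (hp : p ∈ Set.Icc (0:ℝ) 1)
    (hq : q ∈ Set.Icc (0:ℝ) 1) (hη : 0 < η)
    (h : bernKL p q < ((9 * η / 2 : ℝ) : EReal)) :
    |q - ((1 - 2 * η) * p + 3 * η) / (1 + 4 * η)| ≤
      3 * Real.sqrt (p * (1 - p) * η + η ^ 2) / (1 + 4 * η) := by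
  refine abs_sub_le_of_sq_sub_le (by linarith) ?_
  rcases eq_or_ne p q with rfl | hpq
  · rw [sub_self, zero_pow two_ne_zero]
    exact mul_nonneg (by positivity) (mul_nonneg (by linarith [hp.1]) (by linarith [hp.2]))
  have hq' : q ∈ Ioo 0 1 := by
    refine ⟨hq.1.lt_of_ne ?_, hq.2.lt_of_ne ?_⟩ <;> rintro rfl
    · exact not_top_lt (bernKL_eq_top (Or.inl rfl) hpq ▸ h)
    · exact not_top_lt (bernKL_eq_top (Or.inr rfl) hpq ▸ h)
  rw [bernKL_eq_klReal hq', EReal.coe_lt_coe_iff] at h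
  have hV : 0 ≤ (p + 2 * q) / 3 * (1 - (p + 2 * q) / 3) :=
    mul_nonneg (by linarith [hp.1, hq'.1]) (by linarith [hp.2, hq'.2])
  calc (q - p) ^ 2 ≤ 2 * klReal p q * ((p + 2 * q) / 3 * (1 - (p + 2 * q) / 3)) :=
        sq_sub_le_two_mul_klReal_mul hp hq'
    _ ≤ 2 * (9 * η / 2) * ((p + 2 * q) / 3 * (1 - (p + 2 * q) / 3)) := by gcongr
    _ = 9 * η * ((p + 2 * q) / 3 * (1 - (p + 2 * q) / 3)) := by ring
end

section
/- The function kl₊ : [0,1] × [0,1] → [0,∞] defined by kl₊(p,q) := kl(p,q) if p > q and kl₊(p,q) := 0 if p ≤ q, is jointly convex. -/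
open Real

/-- `kl₊(p,q) := kl(p,q)` if `p > q`, and `0` otherwise. -/
noncomputable def bernKLplus (p q : ℝ) : EReal :=
  if q < p then bernKL p q else 0

/-!
Since `kl(p, ·)` is convex with minimum `0` at `p`, it is antitone on `(0, p]`, so
`kl₊(p, q) = kl(p, min p q)` whenever this is finite (the only infinite case is `q = 0 < p`).
Put `mᵢ = min pᵢ qᵢ`. The mixture `m = λ m₁ + (1 - λ) m₂` lies below both mixtures
`p = λ p₁ + (1 - λ) p₂` and `q = λ q₁ + (1 - λ) q₂`, hence
`kl₊(p, q) = kl(p, min p q) ≤ kl(p, m) ≤ λ kl(p₁, m₁) + (1 - λ) kl(p₂, m₂)`,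
the last step being the joint convexity of `kl`, i.e. the log-sum inequality.
-/

open Set

-- Jensen for `x ↦ x log x` at the points `aᵢ / bᵢ` with weights `bᵢ / (b₁ + b₂)`.
theorem mul_log_div_add_le_of_pos {a₁ a₂ b₁ b₂ : ℝ} (ha₁ : 0 ≤ a₁) (ha₂ : 0 ≤ a₂)
    (hb₁ : 0 < b₁) (hb₂ : 0 < b₂) :
    (a₁ + a₂) * log ((a₁ + a₂) / (b₁ + b₂)) ≤ a₁ * log (a₁ / b₁) + a₂ * log (a₂ / b₂) := by
  have hB : 0 < b₁ + b₂ := by positivity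
  have hjensen := convexOn_mul_log.2 (mem_Ici.2 (div_nonneg ha₁ hb₁.le))
    (mem_Ici.2 (div_nonneg ha₂ hb₂.le)) (div_nonneg hb₁.le hB.le) (div_nonneg hb₂.le hB.le)
    (by field_simp)
  have hmean : b₁ / (b₁ + b₂) * (a₁ / b₁) + b₂ / (b₁ + b₂) * (a₂ / b₂) =
      (a₁ + a₂) / (b₁ + b₂) := by
    field_simp
  simp only [smul_eq_mul, hmean] at hjensen
  calc (a₁ + a₂) * log ((a₁ + a₂) / (b₁ + b₂))
      = (b₁ + b₂) * ((a₁ + a₂) / (b₁ + b₂) * log ((a₁ + a₂) / (b₁ + b₂))) := by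
        field_simp
    _ ≤ (b₁ + b₂) * (b₁ / (b₁ + b₂) * (a₁ / b₁ * log (a₁ / b₁)) +
          b₂ / (b₁ + b₂) * (a₂ / b₂ * log (a₂ / b₂))) := by gcongr
    _ = a₁ * log (a₁ / b₁) + a₂ * log (a₂ / b₂) := by field_simp

theorem mul_eq_zero_of_imp {c x y : ℝ} (h : y = 0 → x = 0) (hc : c * y = 0) : c * x = 0 := by
  rcases mul_eq_zero.1 hc with hc | hy
  · rw [hc, zero_mul]
  · rw [h hy, mul_zero]

theorem mul_log_div_add_le {a₁ a₂ b₁ b₂ : ℝ} (ha₁ : 0 ≤ a₁) (ha₂ : 0 ≤ a₂)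
    (hb₁ : 0 ≤ b₁) (hb₂ : 0 ≤ b₂) (h₁ : b₁ = 0 → a₁ = 0) (h₂ : b₂ = 0 → a₂ = 0) :
    (a₁ + a₂) * log ((a₁ + a₂) / (b₁ + b₂)) ≤ a₁ * log (a₁ / b₁) + a₂ * log (a₂ / b₂) := by
  rcases hb₁.eq_or_lt with rfl | hb₁
  · simp [h₁ rfl]
  rcases hb₂.eq_or_lt with rfl | hb₂
  · simp [h₂ rfl]
  exact mul_log_div_add_le_of_pos ha₁ ha₂ hb₁ hb₂

theorem mul_mul_log_mul_div_mul (c x y : ℝ) :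
    c * x * log (c * x / (c * y)) = c * (x * log (x / y)) := by
  rcases eq_or_ne c 0 with rfl | hc
  · simp
  · rw [mul_div_mul_left _ _ hc, mul_assoc]

theorem mul_log_div_jointly_convex {t x₁ x₂ y₁ y₂ : ℝ} (ht : t ∈ Icc (0 : ℝ) 1)
    (hx₁ : 0 ≤ x₁) (hx₂ : 0 ≤ x₂) (hy₁ : 0 ≤ y₁) (hy₂ : 0 ≤ y₂)
    (h₁ : y₁ = 0 → x₁ = 0) (h₂ : y₂ = 0 → x₂ = 0) :
    (t * x₁ + (1 - t) * x₂) * log ((t * x₁ + (1 - t) * x₂) / (t * y₁ + (1 - t) * y₂)) ≤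
      t * (x₁ * log (x₁ / y₁)) + (1 - t) * (x₂ * log (x₂ / y₂)) := by
  have ht' : 0 ≤ 1 - t := sub_nonneg.2 ht.2
  rw [← mul_mul_log_mul_div_mul t, ← mul_mul_log_mul_div_mul (1 - t)]
  exact mul_log_div_add_le (mul_nonneg ht.1 hx₁) (mul_nonneg ht' hx₂) (mul_nonneg ht.1 hy₁)
    (mul_nonneg ht' hy₂) (mul_eq_zero_of_imp h₁) (mul_eq_zero_of_imp h₂)

theorem convexComb_mem_Icc {t x y : ℝ} (ht : t ∈ Icc (0 : ℝ) 1) (hx : x ∈ Icc (0 : ℝ) 1)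
    (hy : y ∈ Icc (0 : ℝ) 1) : t * x + (1 - t) * y ∈ Icc (0 : ℝ) 1 :=
  convex_Icc 0 1 hx hy ht.1 (sub_nonneg.2 ht.2) (add_sub_cancel t 1)

theorem convexComb_eq_zero_of_convexComb_eq_zero {t x₁ x₂ y₁ y₂ : ℝ} (ht : t ∈ Icc (0 : ℝ) 1)
    (hy₁ : 0 ≤ y₁) (hy₂ : 0 ≤ y₂) (h₁ : y₁ = 0 → x₁ = 0) (h₂ : y₂ = 0 → x₂ = 0)
    (h : t * y₁ + (1 - t) * y₂ = 0) : t * x₁ + (1 - t) * x₂ = 0 := by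
  obtain ⟨hty₁, hty₂⟩ := (add_eq_zero_iff_of_nonneg (mul_nonneg ht.1 hy₁)
    (mul_nonneg (sub_nonneg.2 ht.2) hy₂)).1 h
  rw [mul_eq_zero_of_imp h₁ hty₁, mul_eq_zero_of_imp h₂ hty₂, add_zero]

theorem eq_zero_of_min_eq_zero {p q : ℝ} (h : q = 0 → p = 0) (hm : min p q = 0) : p = 0 := by
  rcases min_choice p q with hmin | hmin <;> rw [hmin] at hm
  exacts [hm, h hm]

-- `bernKL` without its `⊤` cases; since `0 * log _ = 0`, the formula also covers `p ∈ {0, 1}`.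
noncomputable def bernKLReal (p q : ℝ) : ℝ :=
  p * log (p / q) + (1 - p) * log ((1 - p) / (1 - q))

theorem bernKLReal_self (p : ℝ) : bernKLReal p p = 0 := by
  simp [bernKLReal]

theorem bernKLReal_nonneg {p q : ℝ} (hp : p ∈ Icc (0 : ℝ) 1) (hq : q ∈ Icc (0 : ℝ) 1)
    (h₀ : q = 0 → p = 0) (h₁ : q = 1 → p = 1) : 0 ≤ bernKLReal p q := by
  have h := mul_log_div_add_le hp.1 (sub_nonneg.2 hp.2) hq.1 (sub_nonneg.2 hq.2) h₀
    (fun h => by rw [h₁ (by linarith)]; ring)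
  simpa [bernKLReal] using h

theorem bernKLReal_jointly_convex {t p₁ p₂ q₁ q₂ : ℝ} (ht : t ∈ Icc (0 : ℝ) 1)
    (hp₁ : p₁ ∈ Icc (0 : ℝ) 1) (hp₂ : p₂ ∈ Icc (0 : ℝ) 1)
    (hq₁ : q₁ ∈ Icc (0 : ℝ) 1) (hq₂ : q₂ ∈ Icc (0 : ℝ) 1)
    (h₁₀ : q₁ = 0 → p₁ = 0) (h₁₁ : q₁ = 1 → p₁ = 1)
    (h₂₀ : q₂ = 0 → p₂ = 0) (h₂₁ : q₂ = 1 → p₂ = 1) :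
    bernKLReal (t * p₁ + (1 - t) * p₂) (t * q₁ + (1 - t) * q₂) ≤
      t * bernKLReal p₁ q₁ + (1 - t) * bernKLReal p₂ q₂ := by
  have hpos := mul_log_div_jointly_convex ht hp₁.1 hp₂.1 hq₁.1 hq₂.1 h₁₀ h₂₀
  have hneg := mul_log_div_jointly_convex ht (sub_nonneg.2 hp₁.2) (sub_nonneg.2 hp₂.2)
    (sub_nonneg.2 hq₁.2) (sub_nonneg.2 hq₂.2)
    (fun h => by rw [h₁₁ (by linarith)]; ring) (fun h => by rw [h₂₁ (by linarith)]; ring)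
  have hcomp (x₁ x₂ : ℝ) : 1 - (t * x₁ + (1 - t) * x₂) = t * (1 - x₁) + (1 - t) * (1 - x₂) := by
    ring
  simp only [bernKLReal, hcomp]
  linarith

-- `b` is a convex combination of `a` and `p`, and `bernKLReal p` vanishes at `p`.
theorem bernKLReal_antitoneOn {p : ℝ} (hp : p ≤ 1) : AntitoneOn (bernKLReal p) (Ioc 0 p) := by
  intro a ha b hb hab
  rcases hab.eq_or_lt with rfl | hab
  · rfl
  have hpa : 0 < p - a := by linarith [hb.2]
  set t := (p - b) / (p - a) with ht_def
  have ht : t ∈ Icc (0 : ℝ) 1 :=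
    ⟨div_nonneg (by linarith [hb.2]) hpa.le, (div_le_one hpa).2 (by linarith)⟩
  have hb_eq : t * a + (1 - t) * p = b := by
    rw [ht_def]; field_simp; ring
  have hp_eq : t * p + (1 - t) * p = p := by ring
  have hpIcc : p ∈ Icc (0 : ℝ) 1 := ⟨ha.1.le.trans ha.2, hp⟩
  have haIcc : a ∈ Icc (0 : ℝ) 1 := ⟨ha.1.le, ha.2.trans hp⟩
  have ha₀ : a = 0 → p = 0 := fun h => absurd h ha.1.ne'
  have ha₁ : a = 1 → p = 1 := fun h => le_antisymm hp (h ▸ ha.2)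
  have hconv := bernKLReal_jointly_convex ht hpIcc hpIcc haIcc hpIcc ha₀ ha₁ id id
  rw [hp_eq, hb_eq, bernKLReal_self, mul_zero, add_zero] at hconv
  exact hconv.trans (mul_le_of_le_one_left (bernKLReal_nonneg hpIcc haIcc ha₀ ha₁) ht.2)

theorem bernKLReal_min_jointly_convex {t p₁ p₂ q₁ q₂ : ℝ} (ht : t ∈ Icc (0 : ℝ) 1)
    (hp₁ : p₁ ∈ Icc (0 : ℝ) 1) (hp₂ : p₂ ∈ Icc (0 : ℝ) 1)
    (hq₁ : q₁ ∈ Icc (0 : ℝ) 1) (hq₂ : q₂ ∈ Icc (0 : ℝ) 1)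
    (h₁ : q₁ = 0 → p₁ = 0) (h₂ : q₂ = 0 → p₂ = 0) :
    bernKLReal (t * p₁ + (1 - t) * p₂)
        (min (t * p₁ + (1 - t) * p₂) (t * q₁ + (1 - t) * q₂)) ≤
      t * bernKLReal p₁ (min p₁ q₁) + (1 - t) * bernKLReal p₂ (min p₂ q₂) := by
  have hm₁ : min p₁ q₁ ∈ Icc (0 : ℝ) 1 := ⟨le_min hp₁.1 hq₁.1, (min_le_left _ _).trans hp₁.2⟩
  have hm₂ : min p₂ q₂ ∈ Icc (0 : ℝ) 1 := ⟨le_min hp₂.1 hq₂.1, (min_le_left _ _).trans hp₂.2⟩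
  have hm₁₀ : min p₁ q₁ = 0 → p₁ = 0 := eq_zero_of_min_eq_zero h₁
  have hm₂₀ : min p₂ q₂ = 0 → p₂ = 0 := eq_zero_of_min_eq_zero h₂
  have hconv := bernKLReal_jointly_convex ht hp₁ hp₂ hm₁ hm₂ hm₁₀
    (fun h => le_antisymm hp₁.2 (h ▸ min_le_left _ _)) hm₂₀
    (fun h => le_antisymm hp₂.2 (h ▸ min_le_left _ _))
  refine le_trans ?_ hconv
  set p := t * p₁ + (1 - t) * p₂
  set m := t * min p₁ q₁ + (1 - t) * min p₂ q₂
  have ht' : 0 ≤ 1 - t := sub_nonneg.2 ht.2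
  have hp : p ∈ Icc (0 : ℝ) 1 := convexComb_mem_Icc ht hp₁ hp₂
  have hm_le : m ≤ min p (t * q₁ + (1 - t) * q₂) := le_min
    (add_le_add (mul_le_mul_of_nonneg_left (min_le_left _ _) ht.1)
      (mul_le_mul_of_nonneg_left (min_le_left _ _) ht'))
    (add_le_add (mul_le_mul_of_nonneg_left (min_le_right _ _) ht.1)
      (mul_le_mul_of_nonneg_left (min_le_right _ _) ht'))
  have hm₀ : 0 ≤ m := add_nonneg (mul_nonneg ht.1 hm₁.1) (mul_nonneg ht' hm₂.1)
  rcases hm₀.eq_or_lt with hm | hm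
  · have hp₀ : p = 0 := convexComb_eq_zero_of_convexComb_eq_zero ht hm₁.1 hm₂.1 hm₁₀ hm₂₀ hm.symm
    have hq : t * q₁ + (1 - t) * q₂ ∈ Icc (0 : ℝ) 1 := convexComb_mem_Icc ht hq₁ hq₂
    rw [← hm, hp₀, min_eq_left hq.1]
  · exact bernKLReal_antitoneOn hp.2 ⟨hm, hm_le.trans (min_le_left _ _)⟩
      ⟨hm.trans_le hm_le, min_le_left _ _⟩ hm_le

theorem bernKL_eq_bernKLReal {p q : ℝ} (hp : p ∈ Icc (0 : ℝ) 1) (hq : q ∈ Ioo (0 : ℝ) 1) :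
    bernKL p q = bernKLReal p q := by
  rcases hp.1.eq_or_lt with rfl | hp₀
  · simp [bernKL, bernKLReal, hq.2.ne, ← log_inv]
  rcases hp.2.eq_or_lt with rfl | hp₁
  · simp [bernKL, bernKLReal, hq.1.ne', ← log_inv]
  rw [bernKL, if_neg hp₀.ne', if_neg hp₁.ne, if_neg (by simp [hq.1.ne', hq.2.ne]), bernKLReal]

theorem bernKLplus_zero_right {p : ℝ} (hp : 0 < p) : bernKLplus p 0 = ⊤ := by
  simp [bernKLplus, bernKL, hp, hp.ne']

theorem bernKLplus_eq_bernKLReal_min {p q : ℝ} (hp : p ∈ Icc (0 : ℝ) 1)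
    (hq : q ∈ Icc (0 : ℝ) 1) (h : q = 0 → p = 0) :
    bernKLplus p q = bernKLReal p (min p q) := by
  rw [bernKLplus]
  split_ifs with hqp
  · have hq₀ : 0 < q := hq.1.lt_of_ne fun hq₀ => (h hq₀.symm ▸ hqp).not_ge hq.1
    rw [min_eq_right hqp.le, bernKL_eq_bernKLReal hp ⟨hq₀, hqp.trans_le hp.2⟩]
  · rw [min_eq_left (not_lt.1 hqp), bernKLReal_self, EReal.coe_zero]

theorem bernKLplus_nonneg {p q : ℝ} (hp : p ∈ Icc (0 : ℝ) 1) (hq : q ∈ Icc (0 : ℝ) 1) :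
    0 ≤ bernKLplus p q := by
  by_cases h : q = 0 → p = 0
  · rw [bernKLplus_eq_bernKLReal_min hp hq h, EReal.coe_nonneg]
    exact bernKLReal_nonneg hp ⟨le_min hp.1 hq.1, (min_le_left _ _).trans hp.2⟩
      (eq_zero_of_min_eq_zero h) (fun hm => le_antisymm hp.2 (hm ▸ min_le_left _ _))
  · push Not at h
    rw [h.1, bernKLplus_zero_right (hp.1.lt_of_ne' h.2)]
    exact le_top

/-- The function `kl₊` is jointly convex on `[0,1] × [0,1]`. -/
theorem bernKLplus_jointly_convex (p₁ p₂ q₁ q₂ lam : ℝ)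
    (hp₁ : p₁ ∈ Set.Icc (0:ℝ) 1) (hp₂ : p₂ ∈ Set.Icc (0:ℝ) 1)
    (hq₁ : q₁ ∈ Set.Icc (0:ℝ) 1) (hq₂ : q₂ ∈ Set.Icc (0:ℝ) 1)
    (hlam : lam ∈ Set.Icc (0:ℝ) 1) :
    bernKLplus (lam * p₁ + (1 - lam) * p₂) (lam * q₁ + (1 - lam) * q₂) ≤
      ((lam : ℝ) : EReal) * bernKLplus p₁ q₁ + ((1 - lam : ℝ) : EReal) * bernKLplus p₂ q₂ := by
  rcases hlam.1.eq_or_lt with rfl | hl₀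
  · simp
  rcases hlam.2.eq_or_lt with rfl | hl₁
  · simp
  have hl' : 0 < 1 - lam := sub_pos.2 hl₁
  have hA : 0 ≤ (lam : EReal) * bernKLplus p₁ q₁ :=
    mul_nonneg (EReal.coe_nonneg.2 hl₀.le) (bernKLplus_nonneg hp₁ hq₁)
  have hB : 0 ≤ ((1 - lam : ℝ) : EReal) * bernKLplus p₂ q₂ :=
    mul_nonneg (EReal.coe_nonneg.2 hl'.le) (bernKLplus_nonneg hp₂ hq₂)
  by_cases h₁ : q₁ = 0 → p₁ = 0
  swap
  · push Not at h₁
    rw [h₁.1, bernKLplus_zero_right (hp₁.1.lt_of_ne' h₁.2), EReal.coe_mul_top_of_pos hl₀,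
      EReal.top_add_of_ne_bot (ne_bot_of_le_ne_bot EReal.zero_ne_bot hB)]
    exact le_top
  by_cases h₂ : q₂ = 0 → p₂ = 0
  swap
  · push Not at h₂
    rw [h₂.1, bernKLplus_zero_right (hp₂.1.lt_of_ne' h₂.2), EReal.coe_mul_top_of_pos hl',
      EReal.add_top_of_ne_bot (ne_bot_of_le_ne_bot EReal.zero_ne_bot hA)]
    exact le_top
  rw [bernKLplus_eq_bernKLReal_min hp₁ hq₁ h₁, bernKLplus_eq_bernKLReal_min hp₂ hq₂ h₂,
    bernKLplus_eq_bernKLReal_min (convexComb_mem_Icc hlam hp₁ hp₂)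
      (convexComb_mem_Icc hlam hq₁ hq₂)
      (convexComb_eq_zero_of_convexComb_eq_zero hlam hq₁.1 hq₂.1 h₁ h₂)]
  exact_mod_cast bernKLReal_min_jointly_convex hlam hp₁ hp₂ hq₁ hq₂ h₁ h₂
end
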